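/- Let M and N be smooth manifolds without boundary modelled on finite-dimensional real normed spaces, with N Hausdorff and σ-compact. Then for every ℝ-algebra homomorphism φ : C^∞(N,ℝ) → C^∞(M,ℝ) there exists a unique smooth map f : M → N such that φ(g) = g ∘ f for all g ∈ C^∞(N,ℝ). Equivalently, the map sending a smooth map f : M → N to the precomposition homomorphism g ↦ g ∘ f is a bijection from smooth maps M → N to ℝ-algebra homomorphisms C^∞(N,ℝ) → C^∞(M,ℝ). -/

import Mathlib

/-!
A character `χ : C^∞(N) → ℝ` is evaluation at some point: otherwise every point has a function in
`ker χ` not vanishing there, and a compact sublevel set of a proper smooth function `h` is covered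
by finitely many of them; the sum of their squares plus `(h - χ h)²` lies in `ker χ` yet vanishes
nowhere, so it is a unit, which is absurd. Composing `φ` with evaluations at points of `M` thus
yields a map `f : M → N` with `φ g = g ∘ f`. Smooth functions separate the points of `N`, which
gives uniqueness, and `f` is smooth because, with `β` a bump function at `f x₀` and `e` the chart
there, `e ∘ f = (β ∘ f)⁻¹ • ((β • e) ∘ f)` near `x₀`.
-/

open scoped Manifold ContDiff
open Set Filter Topology

/-- Precomposition with a smooth map `f : M → N`, as an `ℝ`-algebra homomorphism
`C^∞(N,ℝ) →ₐ[ℝ] C^∞(M,ℝ)`. -/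
noncomputable def precompAlgHom
    {E : Type*} [NormedAddCommGroup E] [NormedSpace ℝ E]
    {E' : Type*} [NormedAddCommGroup E'] [NormedSpace ℝ E']
    {M : Type*} [TopologicalSpace M] [ChartedSpace E M]
    {N : Type*} [TopologicalSpace N] [ChartedSpace E' N]
    (f : ContMDiffMap 𝓘(ℝ, E) 𝓘(ℝ, E') M N (⊤ : ℕ∞)) :
    (ContMDiffMap 𝓘(ℝ, E') 𝓘(ℝ, ℝ) N ℝ (⊤ : ℕ∞) →ₐ[ℝ] ContMDiffMap 𝓘(ℝ, E) 𝓘(ℝ, ℝ) M ℝ (⊤ : ℕ∞)) where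
  toFun g := g.comp f
  map_one' := rfl
  map_mul' _ _ := rfl
  map_zero' := rfl
  map_add' _ _ := rfl
  commutes' _ := rfl

section

variable {E : Type*} [NormedAddCommGroup E] [NormedSpace ℝ E]
  {H : Type*} [TopologicalSpace H] {I : ModelWithCorners ℝ E H}
  {M : Type*} [TopologicalSpace M] [ChartedSpace H M]
  {E' : Type*} [NormedAddCommGroup E'] [NormedSpace ℝ E'] [FiniteDimensional ℝ E']
  {H' : Type*} [TopologicalSpace H'] {I' : ModelWithCorners ℝ E' H'}
  {N : Type*} [TopologicalSpace N] [ChartedSpace H' N] {n : ℕ∞}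

theorem ContMDiffMap.isUnit_of_forall_ne_zero {g : C^n⟮I, M; 𝓘(ℝ), ℝ⟯} (hg : ∀ x, g x ≠ 0) :
    IsUnit g :=
  IsUnit.of_mul_eq_one ⟨fun x => (g x)⁻¹, g.contMDiff.inv₀ hg⟩ <|
    ContMDiffMap.ext fun x => mul_inv_cancel₀ (hg x)

noncomputable def ContMDiffMap.evalAlgHom (x : M) : C^n⟮I, M; 𝓘(ℝ), ℝ⟯ →ₐ[ℝ] ℝ :=
  (Pi.evalAlgHom ℝ (fun _ => ℝ) x).comp ContMDiffMap.coeFnAlgHom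

@[simp]
theorem ContMDiffMap.evalAlgHom_apply (x : M) (g : C^n⟮I, M; 𝓘(ℝ), ℝ⟯) : evalAlgHom x g = g x :=
  rfl

theorem contMDiff_of_forall_clm_comp {u : M → E'}
    (hu : ∀ ℓ : E' →L[ℝ] ℝ, ContMDiff I 𝓘(ℝ) n (ℓ ∘ u)) : ContMDiff I 𝓘(ℝ, E') n u := by
  let b := Module.finBasis ℝ E'
  have hcoord : ContMDiff I 𝓘(ℝ, Fin (Module.finrank ℝ E') → ℝ) n (b.equivFunL ∘ u) :=
    contMDiff_pi_space.2 fun i =>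
      hu ((ContinuousLinearMap.proj i).comp b.equivFunL.toContinuousLinearMap)
  simpa [Function.comp_def] using b.equivFunL.symm.toContinuousLinearMap.contMDiff.comp hcoord

variable [IsManifold I' ∞ N] [T2Space N]

theorem contMDiff_of_forall_contMDiff_comp {f : M → N}
    (hf : ∀ g : N → ℝ, ContMDiff I' 𝓘(ℝ) ∞ g → ContMDiff I 𝓘(ℝ) n (g ∘ f)) :
    ContMDiff I I' n f := by
  intro x₀
  let β : SmoothBumpFunction I' (f x₀) := Classical.arbitrary _
  let e := extChartAt I' (f x₀)
  have hβ : ContMDiff I 𝓘(ℝ) n (β ∘ f) := hf β β.contMDiff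
  have hβe : ContMDiff I 𝓘(ℝ, E') n (fun x => β (f x) • e (f x)) :=
    contMDiff_of_forall_clm_comp fun ℓ =>
      hf _ (ℓ.contMDiff.comp (β.contMDiff_smul contMDiffOn_extChartAt))
  let U := {x | β (f x) ≠ 0}
  have hU : IsOpen U := isOpen_ne.preimage hβ.continuous
  have hsource : ∀ x ∈ U, f x ∈ e.source := fun x hx => by
    rw [extChartAt_source]; exact β.support_subset_source hx
  have hcoord : ContMDiffOn I 𝓘(ℝ, E') n (fun x => (β (f x))⁻¹ • (β (f x) • e (f x))) U :=
    (hβ.contMDiffOn.inv₀ fun _ hx => hx).smul hβe.contMDiffOn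
  have heq : EqOn (fun x => (β (f x))⁻¹ • (β (f x) • e (f x))) (e ∘ f) U := fun x hx => by
    simp [inv_smul_smul₀ hx]
  have hf_on : ContMDiffOn I I' n f U := by
    have : IsManifold I' n N := .of_le (n := ∞) (by exact_mod_cast le_top)
    refine ((contMDiffOn_extChartAt_symm (f x₀)).comp (hcoord.congr heq.symm) ?_).congr ?_
    · exact fun x hx => e.map_source (hsource x hx)
    · exact fun x hx => (e.left_inv (hsource x hx)).symm
  exact hf_on.contMDiffAt (hU.mem_nhds (by simp [U]))

variable [SigmaCompactSpace N]

theorem eq_of_forall_contMDiffMap_apply_eq {p q : N}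
    (h : ∀ g : C^n⟮I', N; 𝓘(ℝ), ℝ⟯, g p = g q) : p = q := by
  by_contra hpq
  obtain ⟨g, hg₀, hg₁, -⟩ := exists_contMDiffMap_zero_one_of_isClosed (n := n) I'
    (isClosed_singleton (x := p)) (isClosed_singleton (x := q)) (disjoint_singleton.2 hpq)
  exact zero_ne_one ((hg₀ rfl).symm.trans ((h g).trans (hg₁ rfl)))

theorem exists_contMDiffMap_isCompact_sublevel :
    ∃ h : C^n⟮I', N; 𝓘(ℝ), ℝ⟯, ∀ c : ℝ, IsCompact {x | h x ≤ c} := by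
  have := Manifold.locallyCompact_of_finiteDimensional (M := N) I'
  let K := CompactExhaustion.choice N
  -- a smooth `h ≥ K.find` exists because `K.find` is locally bounded above
  have hloc : ∀ x : N, ∃ c : ℝ, ∀ᶠ y in 𝓝 x, c ∈ Ici ((K.find y : ℕ) : ℝ) := fun x =>
    ⟨(K.find x + 1 : ℕ), by
      filter_upwards [isOpen_interior.mem_nhds (K.subset_interior_succ _ (K.mem_find x))] with y hy
      exact mem_Ici.2 (by exact_mod_cast K.mem_iff_find_le.1 (interior_subset hy))⟩
  obtain ⟨h, hh⟩ := exists_contMDiffMap_forall_mem_convex_of_local_const I'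
    (fun x => convex_Ici _) hloc
  refine ⟨h, fun c => (K.isCompact ⌈c⌉₊).of_isClosed_subset
    (isClosed_le h.contMDiff.continuous continuous_const) fun x hx => ?_⟩
  exact K.mem_iff_find_le.2 (by exact_mod_cast (hh x).trans (hx.trans (Nat.le_ceil c)))

theorem exists_forall_mem_ker_apply_eq_zero (χ : C^n⟮I', N; 𝓘(ℝ), ℝ⟯ →ₐ[ℝ] ℝ) :
    ∃ p : N, ∀ g ∈ RingHom.ker χ, g p = 0 := by
  by_contra! hcon
  choose g hχg hgp using hcon
  obtain ⟨h, hh⟩ := exists_contMDiffMap_isCompact_sublevel (I' := I') (N := N) (n := n)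
  obtain ⟨s, hs⟩ := (hh (χ h + 1)).elim_finite_subcover (fun p => {x | g p x ≠ 0})
    (fun p => isOpen_ne.preimage (g p).contMDiff.continuous)
    (fun x _ => mem_iUnion.2 ⟨x, hgp x⟩)
  let F := (h - algebraMap ℝ _ (χ h)) ^ 2 + ∑ p ∈ s, g p ^ 2
  have hχF : χ F = 0 := by simp [F, RingHom.mem_ker.1 (hχg _)]
  have hF : ∀ x, F x = (h x - χ h) ^ 2 + ∑ p ∈ s, g p x ^ 2 := fun x => by
    rw [← ContMDiffMap.evalAlgHom_apply, map_add, map_pow, map_sub, AlgHom.commutes, map_sum]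
    simp
  have hFpos : ∀ x, 0 < F x := by
    intro x
    rw [hF]
    have hsum : 0 ≤ ∑ p ∈ s, g p x ^ 2 := Finset.sum_nonneg fun _ _ => sq_nonneg _
    by_cases hx : h x ≤ χ h + 1
    · obtain ⟨p, hps, hpx⟩ := by simpa only [mem_iUnion, exists_prop] using hs hx
      have : 0 < ∑ p ∈ s, g p x ^ 2 :=
        Finset.sum_pos' (fun _ _ => sq_nonneg _) ⟨p, hps, pow_two_pos_of_ne_zero hpx⟩
      positivity
    · nlinarith
  exact ((ContMDiffMap.isUnit_of_forall_ne_zero fun x => (hFpos x).ne').map χ).ne_zero hχF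

theorem exists_eq_evalAlgHom (χ : C^n⟮I', N; 𝓘(ℝ), ℝ⟯ →ₐ[ℝ] ℝ) :
    ∃ p : N, χ = ContMDiffMap.evalAlgHom p := by
  obtain ⟨p, hp⟩ := exists_forall_mem_ker_apply_eq_zero χ
  refine ⟨p, AlgHom.ext fun g => ?_⟩
  have := hp (g - algebraMap ℝ _ (χ g)) (by simp)
  rwa [← ContMDiffMap.evalAlgHom_apply, map_sub, AlgHom.commutes, ContMDiffMap.evalAlgHom_apply,
    Algebra.algebraMap_self, RingHom.id_apply, sub_eq_zero, eq_comm] at this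

theorem exists_forall_algHom_apply_eq_comp
    (φ : C^n⟮I', N; 𝓘(ℝ), ℝ⟯ →ₐ[ℝ] C^n⟮I, M; 𝓘(ℝ), ℝ⟯) :
    ∃ f : C^n⟮I, M; I', N⟯, ∀ g, φ g = g.comp f := by
  choose f hf using fun x : M => exists_eq_evalAlgHom ((ContMDiffMap.evalAlgHom x).comp φ)
  have hφ : ∀ g x, φ g x = g (f x) := fun g x => DFunLike.congr_fun (hf x) g
  have hsmooth : ContMDiff I I' n f := contMDiff_of_forall_contMDiff_comp fun g hg => by
    let g' : C^n⟮I', N; 𝓘(ℝ), ℝ⟯ := ⟨g, hg.of_le (by exact_mod_cast le_top)⟩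
    exact (φ g').contMDiff.congr fun x => (hφ g' x).symm
  exact ⟨⟨f, hsmooth⟩, fun g => ContMDiffMap.ext (hφ g)⟩

end

theorem precompAlgHom_injective
    {E : Type*} [NormedAddCommGroup E] [NormedSpace ℝ E]
    {E' : Type*} [NormedAddCommGroup E'] [NormedSpace ℝ E'] [FiniteDimensional ℝ E']
    {M : Type*} [TopologicalSpace M] [ChartedSpace E M]
    {N : Type*} [TopologicalSpace N] [ChartedSpace E' N]
    [IsManifold 𝓘(ℝ, E') ∞ N] [T2Space N] [SigmaCompactSpace N] :
    Function.Injective (precompAlgHom (E := E) (E' := E') (M := M) (N := N)) := fun _ _ h =>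
  ContMDiffMap.ext fun x => eq_of_forall_contMDiffMap_apply_eq (I' := 𝓘(ℝ, E')) fun g =>
    congrArg (fun ψ => ψ g x) h

theorem stmt_3_general
    {E : Type*} [NormedAddCommGroup E] [NormedSpace ℝ E]
    {E' : Type*} [NormedAddCommGroup E'] [NormedSpace ℝ E'] [FiniteDimensional ℝ E']
    {M : Type*} [TopologicalSpace M] [ChartedSpace E M]
    {N : Type*} [TopologicalSpace N] [ChartedSpace E' N]
    [IsManifold 𝓘(ℝ, E') (⊤ : ℕ∞) N]
    [T2Space N] [SigmaCompactSpace N] :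
    (∀ φ : ContMDiffMap 𝓘(ℝ, E') 𝓘(ℝ, ℝ) N ℝ (⊤ : ℕ∞) →ₐ[ℝ] ContMDiffMap 𝓘(ℝ, E) 𝓘(ℝ, ℝ) M ℝ (⊤ : ℕ∞),
      ∃! f : ContMDiffMap 𝓘(ℝ, E) 𝓘(ℝ, E') M N (⊤ : ℕ∞),
        ∀ g : ContMDiffMap 𝓘(ℝ, E') 𝓘(ℝ, ℝ) N ℝ (⊤ : ℕ∞), φ g = g.comp f) ∧
    Function.Bijective
      (fun f : ContMDiffMap 𝓘(ℝ, E) 𝓘(ℝ, E') M N (⊤ : ℕ∞) => precompAlgHom f) := by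
  have hinj := precompAlgHom_injective (E := E) (E' := E') (M := M) (N := N)
  refine ⟨fun φ => ?_, hinj, fun φ => ?_⟩ <;>
    obtain ⟨f, hf⟩ := exists_forall_algHom_apply_eq_comp φ
  · exact ⟨f, hf, fun f' hf' => hinj (AlgHom.ext fun g => (hf' g).symm.trans (hf g))⟩
  · exact ⟨f, AlgHom.ext fun g => (hf g).symm⟩

/-- Every `ℝ`-algebra homomorphism `C^∞(N,ℝ) →ₐ[ℝ] C^∞(M,ℝ)` is precomposition with a unique
smooth map `f : M → N`; equivalently, `f ↦ (g ↦ g ∘ f)` is a bijection from smooth maps `M → N`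
to `ℝ`-algebra homomorphisms `C^∞(N,ℝ) →ₐ[ℝ] C^∞(M,ℝ)`. -/
theorem stmt_3
    {E : Type*} [NormedAddCommGroup E] [NormedSpace ℝ E] [FiniteDimensional ℝ E]
    {E' : Type*} [NormedAddCommGroup E'] [NormedSpace ℝ E'] [FiniteDimensional ℝ E']
    {M : Type*} [TopologicalSpace M] [ChartedSpace E M]
    [IsManifold 𝓘(ℝ, E) (⊤ : ℕ∞) M]
    {N : Type*} [TopologicalSpace N] [ChartedSpace E' N]
    [IsManifold 𝓘(ℝ, E') (⊤ : ℕ∞) N]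
    [T2Space N] [SigmaCompactSpace N] :
    (∀ φ : ContMDiffMap 𝓘(ℝ, E') 𝓘(ℝ, ℝ) N ℝ (⊤ : ℕ∞) →ₐ[ℝ] ContMDiffMap 𝓘(ℝ, E) 𝓘(ℝ, ℝ) M ℝ (⊤ : ℕ∞),
      ∃! f : ContMDiffMap 𝓘(ℝ, E) 𝓘(ℝ, E') M N (⊤ : ℕ∞),
        ∀ g : ContMDiffMap 𝓘(ℝ, E') 𝓘(ℝ, ℝ) N ℝ (⊤ : ℕ∞), φ g = g.comp f) ∧
    Function.Bijective
      (fun f : ContMDiffMap 𝓘(ℝ, E) 𝓘(ℝ, E') M N (⊤ : ℕ∞) => precompAlgHom f) :=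
  stmt_3_general
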